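/- arXiv:2510.17455 — 3 statements merged into one kernel-verified Lean document; each statement's English description precedes it below -/
import Mathlib

section
/- Let d ≥ 1 and let f : ℝ^d → [0,∞) be measurable with ρ_f := ∫_{ℝ^d} f(ξ) dξ ∈ (0,∞), ∫_{ℝ^d} |ξ|² f(ξ) dξ < ∞ and ∫_{ℝ^d} f(ξ)|log f(ξ)| dξ < ∞, and set u_f := ρ_f^{-1} ∫_{ℝ^d} ξ f(ξ) dξ. Then for every ρ > 0 and every u ∈ ℝ^d the decomposition ∫_{ℝ^d} f log(f/M_{ρ,u}) dξ = ∫_{ℝ^d} f log(f/M_{ρ_f,u_f}) dξ + ρ_f log(ρ_f/ρ) + (ρ_f/2)|u_f − u|² holds. -/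
open MeasureTheory Real
open scoped RealInnerProductSpace

/-- The local Maxwellian `M_{ρ,u}(ξ) = ρ (2π)^{-d/2} exp(-|ξ-u|²/2)`. -/
noncomputable def maxwellian (d : ℕ) (ρ : ℝ) (u ξ : EuclideanSpace ℝ (Fin d)) : ℝ :=
  ρ * (2 * π) ^ (-(d : ℝ) / 2) * Real.exp (-‖ξ - u‖ ^ 2 / 2)

lemma maxwellian_pos {d : ℕ} {ρ : ℝ} (hρ : 0 < ρ) (u ξ : EuclideanSpace ℝ (Fin d)) :
    0 < maxwellian d ρ u ξ := by
  unfold maxwellian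
  have h2π : (0:ℝ) < 2 * π := by positivity
  positivity

lemma log_maxwellian {d : ℕ} {ρ : ℝ} (hρ : 0 < ρ) (u ξ : EuclideanSpace ℝ (Fin d)) :
    Real.log (maxwellian d ρ u ξ)
      = Real.log ρ + (-(d : ℝ) / 2) * Real.log (2 * π) - ‖ξ - u‖ ^ 2 / 2 := by
  have h2π : (0:ℝ) < 2 * π := by positivity
  unfold maxwellian
  rw [Real.log_mul (by positivity) (Real.exp_ne_zero _),
    Real.log_mul (ne_of_gt hρ) (ne_of_gt (Real.rpow_pos_of_pos h2π _)),
    Real.log_exp, Real.log_rpow h2π]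
  ring

/-- Decomposition of the relative entropy with respect to a local Maxwellian:
`∫ f log(f/M_{ρ,u}) = ∫ f log(f/M_{ρ_f,u_f}) + ρ_f log(ρ_f/ρ) + (ρ_f/2)|u_f − u|²`,
where `ρ_f = ∫ f` and `u_f = ρ_f⁻¹ ∫ ξ f`. -/
theorem relative_entropy_decomposition
    (d : ℕ) (hd : 1 ≤ d)
    (f : EuclideanSpace ℝ (Fin d) → ℝ)
    (hf_meas : Measurable f)
    (hf_nonneg : ∀ ξ, 0 ≤ f ξ)
    (hf_int : Integrable f)
    (hmass_pos : 0 < ∫ ξ, f ξ)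
    (hmom2 : Integrable fun ξ => ‖ξ‖ ^ 2 * f ξ)
    (hent : Integrable fun ξ => f ξ * |Real.log (f ξ)|)
    (ρ : ℝ) (hρ : 0 < ρ) (u : EuclideanSpace ℝ (Fin d)) :
    (∫ ξ, f ξ * Real.log (f ξ / maxwellian d ρ u ξ))
      = (∫ ξ, f ξ * Real.log (f ξ /
            maxwellian d (∫ ζ, f ζ) ((∫ ζ, f ζ)⁻¹ • ∫ ζ, f ζ • ζ) ξ))
        + (∫ ζ, f ζ) * Real.log ((∫ ζ, f ζ) / ρ)
        + ((∫ ζ, f ζ) / 2) * ‖(∫ ζ, f ζ)⁻¹ • (∫ ζ, f ζ • ζ) - u‖ ^ 2 := by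
  set ρf := ∫ ζ, f ζ with hρf
  set I := ∫ ζ, f ζ • ζ with hIdef
  set uf := ρf⁻¹ • I with huf
  have hρf_pos : 0 < ρf := hmass_pos
  -- integrability facts
  have hnorm2 : Integrable fun ξ => f ξ * ‖ξ‖ ^ 2 := by
    simpa [mul_comm] using hmom2
  have hnorm1 : Integrable fun ξ => f ξ * ‖ξ‖ := by
    refine (hf_int.add hnorm2).mono'
      ((hf_meas.mul measurable_norm).aestronglyMeasurable) ?_
    filter_upwards with ξ
    rw [Real.norm_eq_abs, abs_of_nonneg (mul_nonneg (hf_nonneg ξ) (norm_nonneg ξ)),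
      Pi.add_apply]
    nlinarith [hf_nonneg ξ, norm_nonneg ξ, sq_nonneg (‖ξ‖ - 1)]
  have hvec : Integrable fun ξ => f ξ • ξ := by
    refine hnorm1.mono' ((hf_meas.smul measurable_id).aestronglyMeasurable) ?_
    filter_upwards with ξ
    rw [norm_smul, Real.norm_eq_abs, abs_of_nonneg (hf_nonneg ξ)]
  have hinner : ∀ v : EuclideanSpace ℝ (Fin d),
      Integrable fun ξ => f ξ * ⟪ξ, v⟫ := by
    intro v
    refine (hnorm1.mul_const ‖v‖).mono'
      ((hf_meas.mul (measurable_id.inner measurable_const)).aestronglyMeasurable) ?_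
    filter_upwards with ξ
    rw [Real.norm_eq_abs, abs_mul, abs_of_nonneg (hf_nonneg ξ)]
    have h1 := abs_real_inner_le_norm ξ v
    have h2 := hf_nonneg ξ
    nlinarith [abs_nonneg (⟪ξ, v⟫), norm_nonneg ξ, norm_nonneg v]
  have hsq : ∀ v : EuclideanSpace ℝ (Fin d),
      Integrable fun ξ => f ξ * ‖ξ - v‖ ^ 2 := by
    intro v
    have h : (fun ξ : EuclideanSpace ℝ (Fin d) => f ξ * ‖ξ - v‖ ^ 2)
        = fun ξ => (f ξ * ‖ξ‖ ^ 2 - 2 * (f ξ * ⟪ξ, v⟫)) + f ξ * ‖v‖ ^ 2 := by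
      funext ξ
      rw [norm_sub_sq_real]
      ring
    rw [h]
    exact (hnorm2.sub ((hinner v).const_mul 2)).add (hf_int.mul_const _)
  have hflogM : ∀ (ρ' : ℝ), 0 < ρ' → ∀ v : EuclideanSpace ℝ (Fin d),
      Integrable fun ξ => f ξ * Real.log (maxwellian d ρ' v ξ) := by
    intro ρ' hρ' v
    have h : (fun ξ => f ξ * Real.log (maxwellian d ρ' v ξ))
        = fun ξ => f ξ * (Real.log ρ' + (-(d : ℝ) / 2) * Real.log (2 * π))
            - f ξ * ‖ξ - v‖ ^ 2 / 2 := by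
      funext ξ
      rw [log_maxwellian hρ']
      ring
    rw [h]
    exact (hf_int.mul_const _).sub ((hsq v).div_const 2)
  have hflogf : Integrable fun ξ => f ξ * Real.log (f ξ) := by
    refine hent.mono'
      ((hf_meas.mul (Real.measurable_log.comp hf_meas)).aestronglyMeasurable) ?_
    filter_upwards with ξ
    rw [Real.norm_eq_abs, abs_mul, abs_of_nonneg (hf_nonneg ξ)]
  -- split the relative entropy
  have hsplit : ∀ (ρ' : ℝ), 0 < ρ' → ∀ v : EuclideanSpace ℝ (Fin d),
      (∫ ξ, f ξ * Real.log (f ξ / maxwellian d ρ' v ξ))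
        = (∫ ξ, f ξ * Real.log (f ξ))
            - ∫ ξ, f ξ * Real.log (maxwellian d ρ' v ξ) := by
    intro ρ' hρ' v
    rw [← integral_sub hflogf (hflogM ρ' hρ' v)]
    congr 1
    funext ξ
    by_cases h : f ξ = 0
    · simp [h]
    · rw [Real.log_div h (ne_of_gt (maxwellian_pos hρ' v ξ))]
      ring
  -- moments
  have hint_inner : ∀ v : EuclideanSpace ℝ (Fin d),
      (∫ ξ, f ξ * ⟪ξ, v⟫) = ⟪I, v⟫ := by
    intro v
    have h : (fun ξ : EuclideanSpace ℝ (Fin d) => f ξ * ⟪ξ, v⟫)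
        = fun ξ => ⟪v, f ξ • ξ⟫ := by
      funext ξ
      rw [real_inner_smul_right, real_inner_comm]
    rw [h, integral_inner hvec, real_inner_comm]
  have hsq_int : ∀ v : EuclideanSpace ℝ (Fin d),
      (∫ ξ, f ξ * ‖ξ - v‖ ^ 2)
        = (∫ ξ, f ξ * ‖ξ‖ ^ 2) - 2 * ⟪I, v⟫ + ρf * ‖v‖ ^ 2 := by
    intro v
    have h : (fun ξ : EuclideanSpace ℝ (Fin d) => f ξ * ‖ξ - v‖ ^ 2)
        = fun ξ => (f ξ * ‖ξ‖ ^ 2 - 2 * (f ξ * ⟪ξ, v⟫)) + f ξ * ‖v‖ ^ 2 := by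
      funext ξ
      rw [norm_sub_sq_real]
      ring
    have hA : Integrable fun ξ : EuclideanSpace ℝ (Fin d) =>
        f ξ * ‖ξ‖ ^ 2 - 2 * (f ξ * ⟪ξ, v⟫) := hnorm2.sub ((hinner v).const_mul 2)
    have hB : Integrable fun ξ : EuclideanSpace ℝ (Fin d) => f ξ * ‖v‖ ^ 2 :=
      hf_int.mul_const _
    rw [h, integral_add hA hB,
      integral_sub hnorm2 ((hinner v).const_mul 2), integral_const_mul,
      hint_inner v, integral_mul_const]
  have hlogM_int : ∀ (ρ' : ℝ), 0 < ρ' → ∀ v : EuclideanSpace ℝ (Fin d),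
      (∫ ξ, f ξ * Real.log (maxwellian d ρ' v ξ))
        = ρf * (Real.log ρ' + (-(d : ℝ) / 2) * Real.log (2 * π))
            - (∫ ξ, f ξ * ‖ξ - v‖ ^ 2) / 2 := by
    intro ρ' hρ' v
    have h : (fun ξ => f ξ * Real.log (maxwellian d ρ' v ξ))
        = fun ξ => f ξ * (Real.log ρ' + (-(d : ℝ) / 2) * Real.log (2 * π))
            - f ξ * ‖ξ - v‖ ^ 2 / 2 := by
      funext ξ
      rw [log_maxwellian hρ']
      ring
    have hA : Integrable fun ξ : EuclideanSpace ℝ (Fin d) =>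
        f ξ * (Real.log ρ' + (-(d : ℝ) / 2) * Real.log (2 * π)) := hf_int.mul_const _
    have hB : Integrable fun ξ : EuclideanSpace ℝ (Fin d) => f ξ * ‖ξ - v‖ ^ 2 / 2 :=
      (hsq v).div_const 2
    rw [h, integral_sub hA hB, integral_mul_const, integral_div]
  have hI_eq : I = ρf • uf := by
    rw [huf, smul_smul, mul_inv_cancel₀ (ne_of_gt hρf_pos), one_smul]
  have hIu : ⟪I, u⟫ = ρf * ⟪uf, u⟫ := by rw [hI_eq, real_inner_smul_left]
  have hIuf : ⟪I, uf⟫ = ρf * ⟪uf, uf⟫ := by rw [hI_eq, real_inner_smul_left]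
  rw [hsplit ρ hρ u, hsplit ρf hρf_pos uf, hlogM_int ρ hρ u, hlogM_int ρf hρf_pos uf,
    hsq_int u, hsq_int uf, hIu, hIuf,
    Real.log_div (ne_of_gt hρf_pos) (ne_of_gt hρ),
    norm_sub_sq_real uf u, real_inner_self_eq_norm_sq]
  ring
end

section
/- For all real numbers a, b > 0 one has (√a − √b)² ≤ a log(a/b) − (a − b). -/
/-- For all real numbers `a, b > 0`, `(√a − √b)² ≤ a log(a/b) − (a − b)`. -/
theorem sq_sqrt_sub_le_log_gap (a b : ℝ) (ha : 0 < a) (hb : 0 < b) :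
    (Real.sqrt a - Real.sqrt b) ^ 2 ≤ a * Real.log (a / b) - (a - b) := by
  have hsa : (0:ℝ) < Real.sqrt a := Real.sqrt_pos.mpr ha
  have hsb : (0:ℝ) < Real.sqrt b := Real.sqrt_pos.mpr hb
  have ha2 : Real.sqrt a ^ 2 = a := Real.sq_sqrt ha.le
  have hb2 : Real.sqrt b ^ 2 = b := Real.sq_sqrt hb.le
  have hx : Real.log (Real.sqrt b / Real.sqrt a) ≤ Real.sqrt b / Real.sqrt a - 1 :=
    Real.log_le_sub_one_of_pos (by positivity)
  have hlog : Real.log (a / b) = -2 * Real.log (Real.sqrt b / Real.sqrt a) := by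
    rw [Real.log_div hsb.ne' hsa.ne', Real.log_sqrt ha.le, Real.log_sqrt hb.le,
      Real.log_div ha.ne' hb.ne']
    ring
  rw [hlog]
  have hdiv : Real.sqrt b / Real.sqrt a = Real.sqrt b / Real.sqrt a := rfl
  have key : a * (Real.sqrt b / Real.sqrt a) = Real.sqrt a * Real.sqrt b := by
    field_simp
    nlinarith [ha2]
  nlinarith [mul_le_mul_of_nonneg_left hx ha.le, key, ha2, hb2]
end

section
/- Let n ≥ 1 and let p, q : ℝ^n → [0,∞) be probability densities with respect to Lebesgue measure such that p = 0 almost everywhere on the set {q = 0} and ∫_{ℝ^n} p log(p/q) dz < ∞. Then the refined Csiszár–Kullback–Pinsker inequality holds: (1/2) ( ∫_{ℝ^n} |p − q| dz )² + ∫_{ℝ^n} (√p − √q)² dz ≤ 2 ∫_{ℝ^n} p log(p/q) dz. -/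
open MeasureTheory Real InformationTheory Set

/-!
Both terms on the left are bounded pointwise by `a log (a / b) - a + b` at `a = p z`, `b = q z`,
whose integral is the relative entropy because `p` and `q` have the same mass. For the Hellinger
term this is `log t ≤ t - 1` at `t = √(b / a)`. For the other, Cauchy–Schwarz with the weight
`p + 2q` of mass `3` gives `(∫ |p - q|)² ≤ 3 ∫ (p - q)² / (p + 2q)`, and
`3/2 (a - b)² / (a + 2b) ≤ a log (a / b) - a + b` is, at `x = a / b`, the inequality
`3 (x - 1)² / (2 (x + 2)) ≤ x log x - x + 1`; the difference of the two sides is convex on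
`(0, ∞)` with a critical point at `x = 1`.
-/

noncomputable def klFunGap (x : ℝ) : ℝ := klFun x - 3 * (x - 1) ^ 2 / (2 * (x + 2))

lemma hasDerivAt_klFunGap {x : ℝ} (hx : 0 < x) :
    HasDerivAt klFunGap (log x - 3 * (x - 1) * (x + 5) / (2 * (x + 2) ^ 2)) x := by
  have hquad : HasDerivAt (fun y => 3 * (y - 1) ^ 2 / (2 * (y + 2)))
      (3 * (x - 1) * (x + 5) / (2 * (x + 2) ^ 2)) x := by
    have := (((hasDerivAt_id' x).sub_const 1).fun_pow 2 |>.const_mul 3).fun_div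
      ((hasDerivAt_id' x).add_const 2 |>.const_mul 2) (by positivity)
    refine this.congr_deriv ?_
    field_simp
    ring
  exact (hasDerivAt_klFun hx.ne').sub hquad

lemma hasDerivAt_deriv_klFunGap {x : ℝ} (hx : 0 < x) :
    HasDerivAt (fun y => log y - 3 * (y - 1) * (y + 5) / (2 * (y + 2) ^ 2))
      (x⁻¹ - 27 / (x + 2) ^ 3) x := by
  have := (((hasDerivAt_id' x).sub_const 1).const_mul 3 |>.fun_mul
    ((hasDerivAt_id' x).add_const 5)).fun_div
    ((hasDerivAt_id' x).add_const 2 |>.fun_pow 2 |>.const_mul 2) (by positivity)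
  refine ((hasDerivAt_log hx.ne').sub this).congr_deriv ?_
  field_simp
  ring

lemma convexOn_klFunGap : ConvexOn ℝ (Ioi 0) klFunGap := by
  refine convexOn_of_hasDerivWithinAt2_nonneg (convex_Ioi 0)
    (fun x hx => (hasDerivAt_klFunGap hx).continuousAt.continuousWithinAt)
    (fun x hx => (hasDerivAt_klFunGap (interior_Ioi.subset hx)).hasDerivWithinAt)
    (fun x hx => (hasDerivAt_deriv_klFunGap (interior_Ioi.subset hx)).hasDerivWithinAt) ?_
  rw [interior_Ioi]
  intro x (hx : 0 < x)
  -- AM-GM for `x, 1, 1`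
  have h27 : 27 * x ≤ (x + 2) ^ 3 := by nlinarith [sq_nonneg (x - 1)]
  have : 27 / (x + 2) ^ 3 ≤ x⁻¹ := by
    rw [div_le_iff₀ (by positivity), inv_mul_eq_div, le_div_iff₀ hx]
    linarith
  linarith

lemma klFunGap_nonneg {x : ℝ} (hx : 0 ≤ x) : 0 ≤ klFunGap x := by
  rcases hx.eq_or_lt with rfl | hx
  · norm_num [klFunGap, klFun_zero]
  have hmin : IsMinOn klFunGap (Ioi 0) 1 := by
    refine convexOn_klFunGap.isMinOn_of_rightDeriv_eq_zero (by simp) ?_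
    rw [((hasDerivAt_klFunGap one_pos).hasDerivWithinAt).derivWithin (uniqueDiffWithinAt_Ioi 1)]
    simp
  simpa [klFunGap, klFun_one] using hmin hx

lemma mul_klFun_div {a b : ℝ} (hb : b ≠ 0) : b * klFun (a / b) = a * log (a / b) - a + b := by
  rw [klFun_apply]
  field_simp
  ring

lemma three_halves_mul_sq_sub_div_le_mul_log_div_sub_add {a b : ℝ} (ha : 0 ≤ a) (hb : 0 ≤ b)
    (hab : b = 0 → a = 0) :
    3 / 2 * ((a - b) ^ 2 / (a + 2 * b)) ≤ a * log (a / b) - a + b := by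
  rcases hb.eq_or_lt with rfl | hb
  · simp [hab rfl]
  have key : b * klFunGap (a / b)
      = a * log (a / b) - a + b - 3 / 2 * ((a - b) ^ 2 / (a + 2 * b)) := by
    rw [klFunGap, mul_sub, mul_klFun_div hb.ne']
    field_simp
  linarith [mul_nonneg hb.le (klFunGap_nonneg (div_nonneg ha hb.le))]

lemma sq_sqrt_sub_sqrt_le_mul_log_div_sub_add {a b : ℝ} (ha : 0 ≤ a) (hb : 0 ≤ b)
    (hab : b = 0 → a = 0) :
    (√a - √b) ^ 2 ≤ a * log (a / b) - a + b := by
  rcases hb.eq_or_lt with rfl | hb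
  · simp [hab rfl]
  rcases ha.eq_or_lt with rfl | ha
  · simp [sq_sqrt hb.le]
  have hlog : 1 - √b / √a ≤ log (√a / √b) := by
    simpa using one_sub_inv_le_log_of_pos (div_pos (sqrt_pos.2 ha) (sqrt_pos.2 hb))
  have hdouble : log (a / b) = 2 * log (√a / √b) := by
    rw [← sqrt_div ha.le, log_sqrt (div_nonneg ha.le hb.le)]
    ring
  have hsa : √a ≠ 0 := (sqrt_pos.2 ha).ne'
  have hcancel : a * (√b / √a) = √a * √b := by
    field_simp
    linear_combination -sq_sqrt ha.le
  calc (√a - √b) ^ 2 = 2 * (a - √a * √b) - a + b := by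
        linear_combination sq_sqrt ha.le + sq_sqrt hb.le
    _ ≤ a * log (a / b) - a + b := by
        rw [hdouble, ← hcancel]
        nlinarith

section
variable {α : Type*} [MeasurableSpace α] {μ : Measure α} {p q : α → ℝ}

lemma sq_integral_mul_le_integral_sq_mul_integral_sq {f g : α → ℝ} (hf0 : 0 ≤ᵐ[μ] f)
    (hg0 : 0 ≤ᵐ[μ] g) (hf : MemLp f 2 μ) (hg : MemLp g 2 μ) :
    (∫ z, f z * g z ∂μ) ^ 2 ≤ (∫ z, f z ^ 2 ∂μ) * ∫ z, g z ^ 2 ∂μ := by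
  have hconj : (2 : ℝ).HolderConjugate 2 := .two_two
  have holder := integral_mul_le_Lp_mul_Lq_of_nonneg hconj hf0 hg0
    (by rwa [ENNReal.ofReal_ofNat]) (by rwa [ENNReal.ofReal_ofNat])
  simp only [rpow_two, ← sqrt_eq_rpow] at holder
  have hfg0 : 0 ≤ ∫ z, f z * g z ∂μ :=
    integral_nonneg_of_ae (by filter_upwards [hf0, hg0] with z hf hg using mul_nonneg hf hg)
  calc (∫ z, f z * g z ∂μ) ^ 2 ≤ (√(∫ z, f z ^ 2 ∂μ) * √(∫ z, g z ^ 2 ∂μ)) ^ 2 := by gcongr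
    _ = (∫ z, f z ^ 2 ∂μ) * ∫ z, g z ^ 2 ∂μ := by
      rw [mul_pow, sq_sqrt (integral_nonneg fun z => sq_nonneg _),
        sq_sqrt (integral_nonneg fun z => sq_nonneg _)]

lemma sq_integral_abs_le_integral_sq_div_mul_integral {x w : α → ℝ}
    (hx : AEStronglyMeasurable x μ) (hw0 : ∀ z, 0 ≤ w z) (hxw : ∀ z, w z = 0 → x z = 0)
    (hw : Integrable w μ) (hxw2 : Integrable (fun z => x z ^ 2 / w z) μ) :
    (∫ z, |x z| ∂μ) ^ 2 ≤ (∫ z, x z ^ 2 / w z ∂μ) * ∫ z, w z ∂μ := by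
  have hf_sq : ∀ z, (|x z| / √(w z)) ^ 2 = x z ^ 2 / w z := fun z => by
    rw [div_pow, sq_abs, sq_sqrt (hw0 z)]
  have hg_sq : ∀ z, √(w z) ^ 2 = w z := fun z => sq_sqrt (hw0 z)
  have hfg : ∀ z, |x z| / √(w z) * √(w z) = |x z| := fun z => by
    rcases (hw0 z).eq_or_lt with h | h
    · simp [hxw z h.symm]
    · exact div_mul_cancel₀ _ (sqrt_pos.2 h).ne'
  have hg_meas : AEStronglyMeasurable (fun z => √(w z)) μ :=
    continuous_sqrt.comp_aestronglyMeasurable hw.aestronglyMeasurable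
  have hf_meas : AEStronglyMeasurable (fun z => |x z| / √(w z)) μ :=
    (hx.aemeasurable.abs.div hg_meas.aemeasurable).aestronglyMeasurable
  have := sq_integral_mul_le_integral_sq_mul_integral_sq
    (ae_of_all μ fun z => by positivity) (ae_of_all μ fun z => sqrt_nonneg (w z))
    ((memLp_two_iff_integrable_sq hf_meas).2 (by simpa only [hf_sq] using hxw2))
    ((memLp_two_iff_integrable_sq hg_meas).2 (by simpa only [hg_sq] using hw))
  simpa only [hfg, hf_sq, hg_sq] using this


lemma integral_le_integral_mul_log_div {F : α → ℝ} (hp : Integrable p μ) (hq : Integrable q μ)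
    (hmass : ∫ z, p z ∂μ = ∫ z, q z ∂μ) (hrel : Integrable (fun z => p z * log (p z / q z)) μ)
    (hF : Integrable F μ) (hle : ∀ᵐ z ∂μ, F z ≤ p z * log (p z / q z) - p z + q z) :
    ∫ z, F z ∂μ ≤ ∫ z, p z * log (p z / q z) ∂μ :=
  calc ∫ z, F z ∂μ ≤ ∫ z, (p z * log (p z / q z) - p z + q z) ∂μ :=
        integral_mono_ae hF ((hrel.sub' hp).fun_add hq) hle
    _ = ∫ z, p z * log (p z / q z) ∂μ := by
        rw [integral_add (hrel.sub' hp) hq, integral_sub hrel hp, hmass]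
        ring

lemma integrable_sq_sub_div_add_two_mul (hp : Integrable p μ) (hq : Integrable q μ)
    (hp0 : ∀ z, 0 ≤ p z) (hq0 : ∀ z, 0 ≤ q z) :
    Integrable (fun z => (p z - q z) ^ 2 / (p z + 2 * q z)) μ := by
  refine (hp.fun_add hq).mono' ?_ (ae_of_all μ fun z => ?_)
  · exact ((hp.sub' hq).aemeasurable.pow_const 2 |>.div
      (hp.fun_add (hq.const_mul 2)).aemeasurable).aestronglyMeasurable
  · have := hp0 z
    have := hq0 z
    rw [norm_of_nonneg (by positivity)]
    exact div_le_of_le_mul₀ (by positivity) (by positivity) (by nlinarith)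

lemma integrable_sq_sqrt_sub_sqrt (hp : Integrable p μ) (hq : Integrable q μ)
    (hp0 : ∀ z, 0 ≤ p z) (hq0 : ∀ z, 0 ≤ q z) :
    Integrable (fun z => (√(p z) - √(q z)) ^ 2) μ := by
  refine (hp.fun_add hq).mono' ?_ (ae_of_all μ fun z => ?_)
  · exact (continuous_sqrt.comp_aestronglyMeasurable hp.aestronglyMeasurable).sub
      (continuous_sqrt.comp_aestronglyMeasurable hq.aestronglyMeasurable) |>.pow 2
  · rw [norm_of_nonneg (sq_nonneg _)]
    nlinarith [sq_sqrt (hp0 z), sq_sqrt (hq0 z), sqrt_nonneg (p z), sqrt_nonneg (q z)]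

end

theorem refined_csiszar_kullback_pinsker_general
    (n : ℕ)
    (p q : EuclideanSpace ℝ (Fin n) → ℝ)
    (hp_nonneg : ∀ z, 0 ≤ p z) (hq_nonneg : ∀ z, 0 ≤ q z)
    (hp_int : Integrable p) (hq_int : Integrable q)
    (hp_mass : ∫ z, p z = 1) (hq_mass : ∫ z, q z = 1)
    (habs : ∀ᵐ z, q z = 0 → p z = 0)
    (hrel : Integrable fun z => p z * Real.log (p z / q z)) :
    (1 / 2) * (∫ z, |p z - q z|) ^ 2
        + (∫ z, (Real.sqrt (p z) - Real.sqrt (q z)) ^ 2)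
      ≤ 2 * ∫ z, p z * Real.log (p z / q z) := by
  have hχ_int := integrable_sq_sub_div_add_two_mul hp_int hq_int hp_nonneg hq_nonneg
  have hTV : (∫ z, |p z - q z|) ^ 2 ≤ (∫ z, (p z - q z) ^ 2 / (p z + 2 * q z)) * 3 := by
    have := sq_integral_abs_le_integral_sq_div_mul_integral
      (hp_int.sub' hq_int).aestronglyMeasurable
      (fun z => by linarith [hp_nonneg z, hq_nonneg z])
      (fun z hz => by linarith [hp_nonneg z, hq_nonneg z])
      (hp_int.fun_add (hq_int.const_mul 2)) hχ_int
    rwa [integral_add hp_int (hq_int.const_mul 2), integral_const_mul, hp_mass, hq_mass,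
      show (1 : ℝ) + 2 * 1 = 3 by norm_num] at this
  have hmass : ∫ z, p z = ∫ z, q z := hp_mass.trans hq_mass.symm
  have hχ : ∫ z, 3 / 2 * ((p z - q z) ^ 2 / (p z + 2 * q z)) ≤ ∫ z, p z * log (p z / q z) :=
    integral_le_integral_mul_log_div hp_int hq_int hmass hrel (hχ_int.const_mul _)
      (habs.mono fun z hz =>
        three_halves_mul_sq_sub_div_le_mul_log_div_sub_add (hp_nonneg z) (hq_nonneg z) hz)
  have hH : ∫ z, (√(p z) - √(q z)) ^ 2 ≤ ∫ z, p z * log (p z / q z) :=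
    integral_le_integral_mul_log_div hp_int hq_int hmass hrel
      (integrable_sq_sqrt_sub_sqrt hp_int hq_int hp_nonneg hq_nonneg)
      (habs.mono fun z hz => sq_sqrt_sub_sqrt_le_mul_log_div_sub_add (hp_nonneg z) (hq_nonneg z) hz)
  rw [integral_const_mul] at hχ
  linarith

/-- Refined Csiszár–Kullback–Pinsker inequality: for probability densities `p, q` on `ℝ^n`
with `p = 0` a.e. on `{q = 0}` and finite relative entropy,
`(1/2) (∫ |p − q|)² + ∫ (√p − √q)² ≤ 2 ∫ p log(p/q)`. -/
theorem refined_csiszar_kullback_pinsker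
    (n : ℕ) (hn : 1 ≤ n)
    (p q : EuclideanSpace ℝ (Fin n) → ℝ)
    (hp_meas : Measurable p) (hq_meas : Measurable q)
    (hp_nonneg : ∀ z, 0 ≤ p z) (hq_nonneg : ∀ z, 0 ≤ q z)
    (hp_int : Integrable p) (hq_int : Integrable q)
    (hp_mass : ∫ z, p z = 1) (hq_mass : ∫ z, q z = 1)
    (habs : ∀ᵐ z, q z = 0 → p z = 0)
    (hrel : Integrable fun z => p z * Real.log (p z / q z)) :
    (1 / 2) * (∫ z, |p z - q z|) ^ 2
        + (∫ z, (Real.sqrt (p z) - Real.sqrt (q z)) ^ 2)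
      ≤ 2 * ∫ z, p z * Real.log (p z / q z) :=
  refined_csiszar_kullback_pinsker_general n p q hp_nonneg hq_nonneg hp_int hq_int hp_mass hq_mass
    habs hrel
end
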